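/- Let H be either the logistic cdf H(a) = 1/(1+e^{−a}) or the probit cdf H(a) = Φ(a) (Φ the standard normal cdf), and fix α ∈ ℝ, β > 0. Consider the time-homogeneous Markov chain on the state space ℤ with transition probabilities P(x, x−1) = H(α+βx) and P(x, x+1) = 1 − H(α+βx). Then the chain is irreducible (for all states x, x′ there exists n ≥ 1 with P^n(x, x′) > 0) and positive recurrent (for every state x, the expected first return time to x, starting from x, is finite). -/

import Mathlib

/-!
Irreducibility holds because from every state both neighbours are reached with positive
probability. Positive recurrence is Foster's criterion: as `H → 1` at `+∞` and `H → 0` at `-∞`,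
outside a finite set the walk steps towards `x₀` with probability at least `3/4`, so
`|z - x₀|` plus a bounded concave correction is a Lyapunov function with drift `≤ -1/2` off `x₀`.
It bounds `∑_{N} P(T > N) = E T` for the return time `T`, uniformly in the truncation, and a
bounded tail sum forces both `P(T < ∞) = 1` and `E T < ∞`.
-/

/-- The logistic sigmoid `σ(a) = 1/(1+e^{−a})`. -/
noncomputable def logisticSigmoid (a : ℝ) : ℝ := 1 / (1 + Real.exp (-a))

/-- The standard normal cumulative distribution function. -/
noncomputable def stdNormalCDF (a : ℝ) : ℝ :=
  ∫ t in Set.Iic a, (Real.sqrt (2 * Real.pi))⁻¹ * Real.exp (-(t ^ 2) / 2)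

/-- One-step transition probabilities of the Bruceton chain on `ℤ`:
`P(x, x−1) = H(α+βx)` and `P(x, x+1) = 1 − H(α+βx)`. -/
noncomputable def brucetonP (H : ℝ → ℝ) (α β : ℝ) (x y : ℤ) : ℝ :=
  if y = x - 1 then H (α + β * x) else if y = x + 1 then 1 - H (α + β * x) else 0

/-- `n`-step transition probabilities `Pⁿ(x, y)` of the Bruceton chain. -/
noncomputable def brucetonPn (H : ℝ → ℝ) (α β : ℝ) : ℕ → ℤ → ℤ → ℝ
  | 0, x, y => if y = x then 1 else 0
  | n + 1, x, y => ∑' z : ℤ, brucetonP H α β x z * brucetonPn H α β n z y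

/-- `brucetonFirstHit H α β x₀ n z` is the probability that the chain started at `z`
visits the state `x₀` for the first time at time `n` (avoiding `x₀` at times `1,…,n−1`).
For `z = x₀` this is the probability that the first return to `x₀` occurs at time `n`. -/
noncomputable def brucetonFirstHit (H : ℝ → ℝ) (α β : ℝ) (x₀ : ℤ) : ℕ → ℤ → ℝ
  | 0, _ => 0
  | 1, z => brucetonP H α β z x₀
  | n + 2, z => ∑' w : ℤ, if w = x₀ then 0 else
      brucetonP H α β z w * brucetonFirstHit H α β x₀ (n + 1) w

open Filter Topology Finset

theorem sum_range_mul_add_mul_one_sub (f : ℕ → ℝ) (N : ℕ) :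
    ∑ n ∈ range (N + 1), (n : ℝ) * f n + N * (1 - ∑ n ∈ range (N + 1), f n) =
      ∑ k ∈ range N, (1 - ∑ n ∈ range (k + 1), f n) := by
  induction N with
  | zero => simp
  | succ N ih =>
    rw [sum_range_succ (fun k => 1 - _), ← ih, sum_range_succ _ (N + 1), sum_range_succ f (N + 1)]
    push_cast
    ring

theorem hasSum_one_and_summable_mul_of_sum_tails_le {f : ℕ → ℝ} (hf : ∀ n, 0 ≤ f n)
    (hle : ∀ N, ∑ n ∈ range (N + 1), f n ≤ 1) {C : ℝ}
    (hC : ∀ N, ∑ k ∈ range N, (1 - ∑ n ∈ range (k + 1), f n) ≤ C) :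
    HasSum f 1 ∧ Summable fun n : ℕ => (n : ℝ) * f n := by
  have hmoment_nonneg : ∀ N, 0 ≤ ∑ n ∈ range N, (n : ℝ) * f n :=
    fun N => sum_nonneg fun n _ => mul_nonneg n.cast_nonneg (hf n)
  have hbound : ∀ N, ∑ n ∈ range (N + 1), (n : ℝ) * f n
      + N * (1 - ∑ n ∈ range (N + 1), f n) ≤ C :=
    fun N => (sum_range_mul_add_mul_one_sub f N).trans_le (hC N)
  constructor
  · have htail : Tendsto (fun N : ℕ => 1 - ∑ n ∈ range (N + 1), f n) atTop (𝓝 0) := by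
      refine squeeze_zero' (Eventually.of_forall fun N => sub_nonneg.2 (hle N)) ?_
        (tendsto_const_div_atTop_nhds_zero_nat C)
      filter_upwards [eventually_gt_atTop 0] with N hN
      rw [le_div_iff₀ (by exact_mod_cast hN)]
      linarith [hbound N, hmoment_nonneg (N + 1)]
    rw [hasSum_iff_tendsto_nat_of_nonneg hf, ← tendsto_add_atTop_iff_nat 1]
    simpa using (tendsto_const_nhds (x := (1 : ℝ))).sub htail
  · refine summable_of_sum_range_le (c := C) (fun n => mul_nonneg n.cast_nonneg (hf n)) fun N => ?_
    cases N with
    | zero => simpa using hC 0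
    | succ N =>
      have := mul_nonneg N.cast_nonneg (sub_nonneg.2 (hle N))
      linarith [hbound N]

section NearestNeighbourWalk

variable (p : ℤ → ℝ) (x₀ : ℤ)

noncomputable def walkOp (g : ℤ → ℝ) (z : ℤ) : ℝ :=
  p z * g (z - 1) + (1 - p z) * g (z + 1)

variable {p} in
theorem walkOp_pos_of_pos_sub_one {g : ℤ → ℝ} {z : ℤ} (hpz : p z ∈ Set.Ioo 0 1) (hg : 0 ≤ g)
    (h : 0 < g (z - 1)) : 0 < walkOp p g z :=
  add_pos_of_pos_of_nonneg (mul_pos hpz.1 h) (mul_nonneg (sub_nonneg.2 hpz.2.le) (hg _))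

variable {p} in
theorem walkOp_pos_of_pos_add_one {g : ℤ → ℝ} {z : ℤ} (hpz : p z ∈ Set.Ioo 0 1) (hg : 0 ≤ g)
    (h : 0 < g (z + 1)) : 0 < walkOp p g z :=
  add_pos_of_nonneg_of_pos (mul_nonneg hpz.1.le (hg _)) (mul_pos (sub_pos.2 hpz.2) h)

/-- `(killedWalkOp p x₀ ^ N) 1 z` is the probability that the walk started at `z` avoids `x₀`
at times `1, …, N`. -/
noncomputable def killedWalkOp : (ℤ → ℝ) →ₗ[ℝ] ℤ → ℝ where
  toFun g := walkOp p fun w => if w = x₀ then 0 else g w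
  map_add' g h := by
    ext z
    simp only [walkOp, Pi.add_apply]
    split_ifs <;> ring
  map_smul' c g := by
    ext z
    simp only [walkOp, Pi.smul_apply, smul_eq_mul, RingHom.id_apply]
    split_ifs <;> ring

theorem killedWalkOp_apply (g : ℤ → ℝ) (z : ℤ) :
    killedWalkOp p x₀ g z = walkOp p (fun w => if w = x₀ then 0 else g w) z :=
  rfl

variable {p x₀}

theorem killedWalkOp_le_killedWalkOp (hp : ∀ z, p z ∈ Set.Icc 0 1) {g h : ℤ → ℝ}
    (hgh : ∀ w, w ≠ x₀ → g w ≤ h w) (z : ℤ) : killedWalkOp p x₀ g z ≤ killedWalkOp p x₀ h z := by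
  have hkill : ∀ w, (if w = x₀ then 0 else g w) ≤ if w = x₀ then 0 else h w := fun w => by
    split_ifs with hw
    exacts [le_rfl, hgh w hw]
  rw [killedWalkOp_apply, killedWalkOp_apply, walkOp, walkOp]
  exact add_le_add (mul_le_mul_of_nonneg_left (hkill _) (hp z).1)
    (mul_le_mul_of_nonneg_left (hkill _) (sub_nonneg.2 (hp z).2))

theorem killedWalkOp_nonneg (hp : ∀ z, p z ∈ Set.Icc 0 1) {g : ℤ → ℝ}
    (hg : ∀ w, w ≠ x₀ → 0 ≤ g w) (z : ℤ) : 0 ≤ killedWalkOp p x₀ g z := by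
  simpa using killedWalkOp_le_killedWalkOp hp (g := 0) hg z

theorem pow_killedWalkOp_nonneg (hp : ∀ z, p z ∈ Set.Icc 0 1) {g : ℤ → ℝ} (hg : 0 ≤ g)
    (n : ℕ) : 0 ≤ (killedWalkOp p x₀ ^ n) g := by
  induction n with
  | zero => exact hg
  | succ n ih =>
    rw [pow_succ', Module.End.mul_apply]
    exact fun z => killedWalkOp_nonneg hp (fun w _ => ih w) z

theorem killedWalkOp_le_walkOp (hp : ∀ z, p z ∈ Set.Icc 0 1) {g : ℤ → ℝ} (hg : 0 ≤ g)
    (z : ℤ) : killedWalkOp p x₀ g z ≤ walkOp p g z := by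
  have hkill : ∀ w, (if w = x₀ then 0 else g w) ≤ g w := fun w => by
    split_ifs
    exacts [hg w, le_rfl]
  rw [killedWalkOp_apply, walkOp]
  exact add_le_add (mul_le_mul_of_nonneg_left (hkill _) (hp z).1)
    (mul_le_mul_of_nonneg_left (hkill _) (sub_nonneg.2 (hp z).2))

/-- Foster's criterion: the partial sums `W N` obey `W (N + 1) = 1 + killedWalkOp p x₀ (W N)`,
and off `x₀` the drift condition makes `2 V` a supersolution of this recursion. -/
theorem sum_pow_killedWalkOp_one_le (hp : ∀ z, p z ∈ Set.Icc 0 1) {V : ℤ → ℝ} (hV : 0 ≤ V)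
    (hdrift : ∀ z, z ≠ x₀ → walkOp p V z ≤ V z - 1 / 2) (N : ℕ) (z : ℤ) :
    (∑ k ∈ range N, (killedWalkOp p x₀ ^ k) 1) z ≤ 1 + killedWalkOp p x₀ (fun w => 2 * V w) z := by
  induction N generalizing z with
  | zero =>
    have := killedWalkOp_nonneg (x₀ := x₀) hp (fun w _ => mul_nonneg zero_le_two (hV w)) z
    simp only [sum_range_zero, Pi.zero_apply]
    linarith
  | succ N ih =>
    have hoff : ∀ w, w ≠ x₀ → (∑ k ∈ range N, (killedWalkOp p x₀ ^ k) 1) w ≤ 2 * V w :=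
      fun w hw => calc
        _ ≤ 1 + killedWalkOp p x₀ (fun w => 2 * V w) w := ih w
        _ ≤ 1 + walkOp p (fun w => 2 * V w) w := by
          gcongr
          exact killedWalkOp_le_walkOp hp (fun w => mul_nonneg zero_le_two (hV w)) w
        _ ≤ 2 * V w := by
          have := hdrift w hw
          simp only [walkOp] at this ⊢
          linarith
    have hshift : ∑ k ∈ range (N + 1), (killedWalkOp p x₀ ^ k) 1 =
        1 + killedWalkOp p x₀ (∑ k ∈ range N, (killedWalkOp p x₀ ^ k) 1) := by
      simp only [sum_range_succ', pow_succ', Module.End.mul_apply, map_sum, pow_zero,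
        Module.End.one_apply, add_comm]
    rw [hshift, Pi.add_apply, Pi.one_apply]
    gcongr
    exact killedWalkOp_le_killedWalkOp hp hoff z

end NearestNeighbourWalk

section Lyapunov

theorem exists_pos_forall_le_of_eventually_cofinite {α : Type*} {f : α → ℝ} {c : ℝ}
    (hc : 0 < c) (hf : ∀ x, 0 < f x) (hev : ∀ᶠ x in cofinite, c ≤ f x) :
    ∃ ρ > 0, ∀ x, ρ ≤ f x := by
  set t : Finset ℝ := insert c ((eventually_cofinite.1 hev).toFinset.image f)
  refine ⟨t.min' (insert_nonempty _ _), (lt_min'_iff _ _).2 fun y hy => ?_, fun x => ?_⟩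
  · obtain rfl | ⟨x, -, rfl⟩ := by simpa [t] using hy
    exacts [hc, hf x]
  · by_cases hx : c ≤ f x
    · exact (min'_le t c (mem_insert_self _ _)).trans hx
    · exact min'_le t (f x) (mem_insert_of_mem (mem_image_of_mem f (by simpa using hx)))

variable {p : ℤ → ℝ} {x₀ : ℤ}

variable (p x₀) in
/-- At `z = x₀` this is the probability of stepping up. -/
noncomputable def stepTowardProb (z : ℤ) : ℝ :=
  if x₀ < z then p z else 1 - p z

/-- The Lyapunov function is `driftProfile C r |z - x₀|`: the linear part has drift `≤ -1/2`
where the walk is biased towards `x₀`, the bounded concave correction makes the drift negative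
on the finitely many remaining states. -/
noncomputable def driftProfile (C r : ℝ) (w : ℕ) : ℝ :=
  w + C * (1 - r ^ w)

theorem driftProfile_nonneg {C r : ℝ} (hC : 0 ≤ C) (hr : 0 ≤ r) (hr1 : r ≤ 1) (w : ℕ) :
    0 ≤ driftProfile C r w :=
  add_nonneg w.cast_nonneg (mul_nonneg hC (sub_nonneg.2 (pow_le_one₀ hr hr1)))

theorem driftProfile_drift {C r q : ℝ} (hC : 0 ≤ C) (hr : 0 < r) (hr2 : r ≤ 1 / 2)
    (hq : 2 * r ≤ q) (w : ℕ) :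
    q * driftProfile C r w + (1 - q) * driftProfile C r (w + 2) ≤
      driftProfile C r (w + 1) + (1 - 2 * q) - C / 2 * r ^ (w + 1) := by
  have key : r / 2 ≤ (1 - r) * (q - (1 - q) * r) := calc
    r / 2 ≤ 1 / 2 * (q - (1 - q) * r) := by nlinarith
    _ ≤ (1 - r) * (q - (1 - q) * r) := mul_le_mul_of_nonneg_right (by linarith) (by nlinarith)
  have hCa : 0 ≤ C * r ^ w := mul_nonneg hC (pow_nonneg hr.le w)
  simp only [driftProfile, pow_succ]
  push_cast
  nlinarith [mul_le_mul_of_nonneg_left key hCa]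

theorem walkOp_comp_natAbs (g : ℕ → ℝ) {z : ℤ} (hz : z ≠ x₀) :
    ∃ w : ℕ, (z - x₀).natAbs = w + 1 ∧
      walkOp p (fun y => g (y - x₀).natAbs) z =
        stepTowardProb p x₀ z * g w + (1 - stepTowardProb p x₀ z) * g (w + 2) := by
  refine ⟨(z - x₀).natAbs - 1, by omega, ?_⟩
  rcases hz.lt_or_gt with h | h
  · rw [walkOp, stepTowardProb, if_neg (by omega), show (z - 1 - x₀).natAbs =
      (z - x₀).natAbs - 1 + 2 by omega, show (z + 1 - x₀).natAbs = (z - x₀).natAbs - 1 by omega]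
    ring
  · rw [walkOp, stepTowardProb, if_pos h, show (z - 1 - x₀).natAbs = (z - x₀).natAbs - 1 by omega,
      show (z + 1 - x₀).natAbs = (z - x₀).natAbs - 1 + 2 by omega]

theorem exists_lyapunov_walkOp (hp : ∀ z, p z ∈ Set.Ioo 0 1)
    (hfar : ∀ᶠ z in cofinite, 3 / 4 ≤ stepTowardProb p x₀ z) :
    ∃ V : ℤ → ℝ, 0 ≤ V ∧ ∀ z, z ≠ x₀ → walkOp p V z ≤ V z - 1 / 2 := by
  have hq : ∀ z, stepTowardProb p x₀ z ∈ Set.Ioo 0 1 := fun z => by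
    have := hp z
    unfold stepTowardProb
    split_ifs <;> constructor <;> linarith [this.1, this.2]
  obtain ⟨ρ, hρ, hρq⟩ := exists_pos_forall_le_of_eventually_cofinite (by norm_num)
    (fun z => (hq z).1) hfar
  obtain ⟨B, hB⟩ := ((eventually_cofinite.1 hfar).image fun z => (z - x₀).natAbs).bddAbove
  have hBfar : ∀ z, B < (z - x₀).natAbs → 3 / 4 ≤ stepTowardProb p x₀ z := fun z hz => by
    by_contra h
    exact absurd (hB ⟨z, h, rfl⟩) (not_le.2 hz)
  have hρ1 : ρ ≤ 1 := (hρq x₀).trans (hq x₀).2.le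
  set r := ρ / 2 with hr_def
  have hr : 0 < r := by positivity
  set C := 3 / r ^ B
  have hC : 0 ≤ C := by positivity
  refine ⟨fun z => driftProfile C r (z - x₀).natAbs,
    fun z => driftProfile_nonneg hC hr.le (by linarith) _, fun z hz => ?_⟩
  obtain ⟨w, hw, heq⟩ := walkOp_comp_natAbs (p := p) (driftProfile C r) hz
  have hdrift := driftProfile_drift (q := stepTowardProb p x₀ z) hC hr (by linarith)
    (by linarith [hρq z]) w
  have hcorr : 0 ≤ C / 2 * r ^ (w + 1) := by positivity
  simp only [heq, hw]
  by_cases hwB : B < w + 1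
  · linarith [hBfar z (hw ▸ hwB)]
  · have hpow : r ^ B ≤ r ^ (w + 1) := pow_le_pow_of_le_one hr.le (by linarith) (by omega)
    have hCB : C * r ^ B = 3 := div_mul_cancel₀ _ (by positivity)
    have hwindow : 3 / 2 ≤ C / 2 * r ^ (w + 1) := by
      nlinarith [mul_le_mul_of_nonneg_left hpow hC]
    linarith [(hq z).1]

end Lyapunov

section Bruceton

variable {H : ℝ → ℝ} {α β : ℝ}

theorem tsum_brucetonP_mul (x : ℤ) (g : ℤ → ℝ) :
    ∑' z, brucetonP H α β x z * g z = walkOp (fun z => H (α + β * z)) g x := by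
  rw [tsum_eq_sum (s := {x - 1, x + 1}), sum_pair (by omega), walkOp]
  · simp [brucetonP, show x + 1 ≠ x - 1 by omega]
  · intro z hz
    simp only [mem_insert, mem_singleton, not_or] at hz
    simp [brucetonP, hz.1, hz.2]

theorem brucetonPn_succ (n : ℕ) (x y : ℤ) :
    brucetonPn H α β (n + 1) x y =
      walkOp (fun z => H (α + β * z)) (fun z => brucetonPn H α β n z y) x :=
  tsum_brucetonP_mul x _

theorem brucetonPn_nonneg (hp : ∀ z : ℤ, H (α + β * z) ∈ Set.Icc 0 1) (n : ℕ) (x y : ℤ) :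
    0 ≤ brucetonPn H α β n x y := by
  induction n generalizing x with
  | zero => rw [brucetonPn]; positivity
  | succ n ih =>
    rw [brucetonPn_succ, walkOp]
    exact add_nonneg (mul_nonneg (hp x).1 (ih _)) (mul_nonneg (sub_nonneg.2 (hp x).2) (ih _))

theorem brucetonPn_pos_sub (hp : ∀ z : ℤ, H (α + β * z) ∈ Set.Ioo 0 1) (m : ℕ) (x : ℤ) :
    0 < brucetonPn H α β m x (x - m) := by
  induction m generalizing x with
  | zero => simp [brucetonPn]
  | succ m ih =>
    rw [brucetonPn_succ]
    refine walkOp_pos_of_pos_sub_one (hp x)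
      (fun z => brucetonPn_nonneg (fun w => Set.Ioo_subset_Icc_self (hp w)) ..) ?_
    simpa [sub_sub, add_comm] using ih (x - 1)

theorem brucetonPn_pos_add (hp : ∀ z : ℤ, H (α + β * z) ∈ Set.Ioo 0 1) (m : ℕ) (x : ℤ) :
    0 < brucetonPn H α β m x (x + m) := by
  induction m generalizing x with
  | zero => simp [brucetonPn]
  | succ m ih =>
    rw [brucetonPn_succ]
    refine walkOp_pos_of_pos_add_one (hp x)
      (fun z => brucetonPn_nonneg (fun w => Set.Ioo_subset_Icc_self (hp w)) ..) ?_
    simpa [add_assoc, add_comm, add_left_comm] using ih (x + 1)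

theorem brucetonPn_two_pos (hp : ∀ z : ℤ, H (α + β * z) ∈ Set.Ioo 0 1) (x : ℤ) :
    0 < brucetonPn H α β 2 x x := by
  rw [brucetonPn_succ]
  refine walkOp_pos_of_pos_add_one (hp x)
    (fun z => brucetonPn_nonneg (fun w => Set.Ioo_subset_Icc_self (hp w)) ..) ?_
  simpa using brucetonPn_pos_sub hp 1 (x + 1)

theorem exists_brucetonPn_pos (hp : ∀ z : ℤ, H (α + β * z) ∈ Set.Ioo 0 1) (x x' : ℤ) :
    ∃ n, 1 ≤ n ∧ 0 < brucetonPn H α β n x x' := by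
  rcases lt_trichotomy x x' with h | rfl | h
  · refine ⟨(x' - x).toNat, by omega, ?_⟩
    have := brucetonPn_pos_add hp (x' - x).toNat x
    rwa [show x + (x' - x).toNat = x' by omega] at this
  · exact ⟨2, one_le_two, brucetonPn_two_pos hp x⟩
  · refine ⟨(x - x').toNat, by omega, ?_⟩
    have := brucetonPn_pos_sub hp (x - x').toNat x
    rwa [show x - (x - x').toNat = x' by omega] at this

end Bruceton

section BrucetonRecurrence

variable {H : ℝ → ℝ} {α β : ℝ} {x₀ : ℤ}

theorem brucetonFirstHit_add_two (n : ℕ) :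
    brucetonFirstHit H α β x₀ (n + 2) =
      killedWalkOp (fun z => H (α + β * z)) x₀ (brucetonFirstHit H α β x₀ (n + 1)) := by
  ext z
  rw [brucetonFirstHit, killedWalkOp_apply, ← tsum_brucetonP_mul]
  congr 1 with w
  split_ifs <;> simp

theorem killedWalkOp_one_eq_one_sub_brucetonP :
    killedWalkOp (fun z => H (α + β * z)) x₀ 1 = 1 - fun z => brucetonP H α β z x₀ := by
  ext z
  simp only [killedWalkOp_apply, walkOp, brucetonP, Pi.one_apply, Pi.sub_apply]
  split_ifs <;> first | omega | ring

theorem brucetonFirstHit_succ_eq_pow (n : ℕ) :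
    brucetonFirstHit H α β x₀ (n + 1) =
      (killedWalkOp (fun z => H (α + β * z)) x₀ ^ n) fun z => brucetonP H α β z x₀ := by
  induction n with
  | zero => rfl
  | succ n ih => rw [brucetonFirstHit_add_two, ih, pow_succ', Module.End.mul_apply]

theorem one_sub_sum_brucetonFirstHit (N : ℕ) (z : ℤ) :
    1 - ∑ n ∈ range (N + 1), brucetonFirstHit H α β x₀ n z =
      (killedWalkOp (fun z => H (α + β * z)) x₀ ^ N) 1 z := by
  induction N generalizing z with
  | zero => simp [brucetonFirstHit]
  | succ N ih =>
    rw [pow_succ, Module.End.mul_apply, killedWalkOp_one_eq_one_sub_brucetonP, map_sub,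
      Pi.sub_apply, ← ih, ← brucetonFirstHit_succ_eq_pow, sum_range_succ]
    ring

theorem brucetonFirstHit_nonneg (hp : ∀ z : ℤ, H (α + β * z) ∈ Set.Icc 0 1) (n : ℕ) (z : ℤ) :
    0 ≤ brucetonFirstHit H α β x₀ n z := by
  cases n with
  | zero => exact le_rfl
  | succ n =>
    rw [brucetonFirstHit_succ_eq_pow]
    refine pow_killedWalkOp_nonneg hp (fun w => ?_) n z
    unfold brucetonP
    split_ifs
    exacts [(hp w).1, sub_nonneg.2 (hp w).2, le_rfl]

theorem brucetonFirstHit_hasSum_and_summable (hp : ∀ z : ℤ, H (α + β * z) ∈ Set.Icc 0 1)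
    {V : ℤ → ℝ} (hV : 0 ≤ V)
    (hdrift : ∀ z, z ≠ x₀ → walkOp (fun z => H (α + β * z)) V z ≤ V z - 1 / 2) :
    HasSum (fun n => brucetonFirstHit H α β x₀ n x₀) 1 ∧
      Summable fun n : ℕ => (n : ℝ) * brucetonFirstHit H α β x₀ n x₀ := by
  have htail (N : ℕ) : 1 - ∑ n ∈ range (N + 1), brucetonFirstHit H α β x₀ n x₀ =
      (killedWalkOp (fun z => H (α + β * z)) x₀ ^ N) 1 x₀ :=
    one_sub_sum_brucetonFirstHit N x₀
  refine hasSum_one_and_summable_mul_of_sum_tails_le (brucetonFirstHit_nonneg hp · x₀)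
    (C := 1 + killedWalkOp (fun z => H (α + β * z)) x₀ (fun w => 2 * V w) x₀)
    (fun N => sub_nonneg.1 ((htail N).trans_ge ?_)) (fun N => ?_)
  · exact pow_killedWalkOp_nonneg hp zero_le_one N x₀
  · simp only [htail]
    rw [← Finset.sum_apply]
    exact sum_pow_killedWalkOp_one_le hp hV hdrift N x₀

end BrucetonRecurrence

theorem eventually_cofinite_le_stepTowardProb {H : ℝ → ℝ} {α β c : ℝ} (hβ : 0 < β) (hc : c < 1)
    (h1 : Tendsto H atTop (𝓝 1)) (h0 : Tendsto H atBot (𝓝 0)) (x₀ : ℤ) :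
    ∀ᶠ z in cofinite, c ≤ stepTowardProb (fun z => H (α + β * z)) x₀ z := by
  have hbot : Tendsto (fun z : ℤ => α + β * z) atBot atBot :=
    tendsto_atBot_add_const_left _ α ((tendsto_intCast_atBot_iff.2 tendsto_id).const_mul_atBot hβ)
  have htop : Tendsto (fun z : ℤ => α + β * z) atTop atTop :=
    tendsto_atTop_add_const_left _ α (tendsto_intCast_atTop_atTop.const_mul_atTop hβ)
  rw [Int.cofinite_eq, eventually_sup]
  constructor
  · filter_upwards [eventually_le_atBot x₀,
      (h0.comp hbot).eventually (eventually_le_nhds (sub_pos.2 hc))] with z hz hH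
    rw [stepTowardProb, if_neg hz.not_gt]
    linarith [show H (α + β * z) ≤ 1 - c from hH]
  · filter_upwards [eventually_gt_atTop x₀,
      (h1.comp htop).eventually (eventually_ge_nhds hc)] with z hz hH
    rwa [stepTowardProb, if_pos hz]

theorem logisticSigmoid_mem_Ioo (a : ℝ) : logisticSigmoid a ∈ Set.Ioo 0 1 := by
  have := Real.exp_pos (-a)
  rw [logisticSigmoid]
  exact ⟨by positivity, (div_lt_one (by linarith)).2 (by linarith)⟩

theorem logisticSigmoid_eq_inv : logisticSigmoid = fun a => (1 + Real.exp (-a))⁻¹ :=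
  funext fun _ => one_div _

theorem tendsto_logisticSigmoid_atTop : Tendsto logisticSigmoid atTop (𝓝 1) := by
  have hexp : Tendsto (fun a => Real.exp (-a)) atTop (𝓝 0) :=
    Real.tendsto_exp_atBot.comp tendsto_neg_atTop_atBot
  rw [logisticSigmoid_eq_inv]
  simpa using (hexp.const_add 1).inv₀ (by norm_num)

theorem tendsto_logisticSigmoid_atBot : Tendsto logisticSigmoid atBot (𝓝 0) := by
  have hexp : Tendsto (fun a => Real.exp (-a)) atBot atTop :=
    Real.tendsto_exp_atTop.comp tendsto_neg_atBot_atTop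
  rw [logisticSigmoid_eq_inv]
  exact (tendsto_atTop_add_const_left _ 1 hexp).inv_tendsto_atTop

section StdNormalCDF

open MeasureTheory ProbabilityTheory
open scoped NNReal

theorem stdNormalCDF_eq_cdf : stdNormalCDF = cdf (gaussianReal 0 1) := by
  ext a
  rw [cdf_eq_real, measureReal_def, gaussianReal_apply_eq_integral _ one_ne_zero,
    ENNReal.toReal_ofReal (setIntegral_nonneg measurableSet_Iic
      fun x _ => gaussianPDFReal_nonneg _ _ x)]
  simp [stdNormalCDF, gaussianPDFReal]

theorem gaussianReal_real_pos (μ : ℝ) {v : ℝ≥0} (hv : v ≠ 0) {s : Set ℝ} (hs : volume s ≠ 0) :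
    0 < (gaussianReal μ v).real s :=
  ENNReal.toReal_pos (fun h => hs (gaussianReal_absolutelyContinuous' μ hv h)) (measure_ne_top _ _)

theorem stdNormalCDF_mem_Ioo (a : ℝ) : stdNormalCDF a ∈ Set.Ioo 0 1 := by
  rw [stdNormalCDF_eq_cdf, cdf_eq_real]
  have hupper := gaussianReal_real_pos 0 one_ne_zero (s := (Set.Iic a)ᶜ) (by simp)
  rw [probReal_compl_eq_one_sub measurableSet_Iic] at hupper
  exact ⟨gaussianReal_real_pos 0 one_ne_zero (by simp), by linarith⟩

theorem tendsto_stdNormalCDF_atTop : Tendsto stdNormalCDF atTop (𝓝 1) :=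
  stdNormalCDF_eq_cdf ▸ tendsto_cdf_atTop _

theorem tendsto_stdNormalCDF_atBot : Tendsto stdNormalCDF atBot (𝓝 0) :=
  stdNormalCDF_eq_cdf ▸ tendsto_cdf_atBot _

end StdNormalCDF

/-- For `H` the logistic or probit cdf, `α ∈ ℝ` and `β > 0`, the Bruceton chain on `ℤ`
with `P(x,x−1) = H(α+βx)`, `P(x,x+1) = 1 − H(α+βx)` is irreducible (any state reaches
any other in some `n ≥ 1` steps with positive probability) and positive recurrent
(from any state, the chain returns to it almost surely and the expected first return
time is finite). -/
theorem stmt_7 (H : ℝ → ℝ) (hH : H = logisticSigmoid ∨ H = stdNormalCDF)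
    (α β : ℝ) (hβ : 0 < β) :
    (∀ x x' : ℤ, ∃ n : ℕ, 1 ≤ n ∧ 0 < brucetonPn H α β n x x') ∧
    (∀ x : ℤ,
      HasSum (fun n : ℕ => brucetonFirstHit H α β x n x) 1 ∧
      Summable (fun n : ℕ => (n : ℝ) * brucetonFirstHit H α β x n x)) := by
  obtain ⟨hIoo, htop, hbot⟩ :
      (∀ a, H a ∈ Set.Ioo 0 1) ∧ Tendsto H atTop (𝓝 1) ∧ Tendsto H atBot (𝓝 0) := by
    rcases hH with rfl | rfl
    · exact ⟨logisticSigmoid_mem_Ioo, tendsto_logisticSigmoid_atTop, tendsto_logisticSigmoid_atBot⟩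
    · exact ⟨stdNormalCDF_mem_Ioo, tendsto_stdNormalCDF_atTop, tendsto_stdNormalCDF_atBot⟩
  refine ⟨exists_brucetonPn_pos fun z => hIoo _, fun x => ?_⟩
  obtain ⟨V, hV, hdrift⟩ := exists_lyapunov_walkOp (fun z => hIoo _)
    (eventually_cofinite_le_stepTowardProb hβ (by norm_num) htop hbot x)
  exact brucetonFirstHit_hasSum_and_summable (fun z => Set.Ioo_subset_Icc_self (hIoo _)) hV hdrift
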